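/- Let α ∈ (0,1) and let ψ be the one-sided stable probability distribution of exponent α, i.e., the probability measure on [0,∞) whose characteristic function is φ(ξ) = exp(−|ξ|^α (1 − i·tan(πα/2)·sgn(ξ))). Let θ : ℕ → (0,∞) satisfy θ_n / n^{1/α} → ∞ as n → ∞. Then for every integer k ≥ 2 and every real t > 0, lim_{n→∞} f(k, n, t·θ_n) = 0. -/

import Mathlib

/-!
Summing the renewal identity `ψ^{*(j+1)}((s,∞)) = ψ^{*j}((s,∞)) + ∫_{[0,s]} ψ((s-u,∞)) ψ^{*j}(du)`
over `j < J` shows that the first `J` unweighted terms of the series `f(k,n,s)` add up to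
`ψ^{*J}((s,∞)) ≤ 1`, so that `f(k,n,s) ≤ ψ^{*J}((s,∞)) + (1 - k/n)^J`. The characteristic function
of `ψ^{*J}` is `φ^J = exp(J w)` with `Re w ≤ 0`, so `|1 - φ(ξ)^J| ≤ J |w| ≤ J |ξ|^α (1 + |tan(πα/2)|)`;
the classical truncation inequality then gives `ψ^{*J}((s,∞)) ≤ 2 J (2/s)^α (1 + |tan(πα/2)|)`.
Taking `s = t θ_n` and `J = n m`, the first term is `O(m n / θ_n^α) → 0` as `n → ∞` and the second
is at most `e^{-k m}`; finally let `m → ∞`.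
-/

open MeasureTheory Real Filter Topology

/-- `j`-fold convolution power of a measure on ℝ, with `convPow ψ 0 = δ₀`. -/
noncomputable def convPow (ψ : Measure ℝ) : ℕ → Measure ℝ
  | 0 => Measure.dirac 0
  | (j + 1) => ((convPow ψ j).prod ψ).map (fun p => p.1 + p.2)

/-- `f(k, n, s) = Σ_{j=0}^∞ (1 − k/n)^j ∫_{[0,s]} ψ((s−u, ∞)) ψ^{*j}(du)`. -/
noncomputable def pauseF (ψ : Measure ℝ) (k n : ℕ) (s : ℝ) : ℝ :=
  ∑' j : ℕ, (1 - (k : ℝ) / n) ^ j *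
    ∫ u in Set.Icc (0 : ℝ) s, (ψ (Set.Ioi (s - u))).toReal ∂(convPow ψ j)

/-- characteristic function `φ(ξ) = ∫ e^{iξx} ψ(dx)`. -/
noncomputable def charFn (ψ : Measure ℝ) (ξ : ℝ) : ℂ :=
  ∫ x, Complex.exp (Complex.I * ξ * x) ∂ψ

open Set

lemma Complex.norm_exp_sub_one_le_of_re_nonpos {z : ℂ} (hz : z.re ≤ 0) :
    ‖Complex.exp z - 1‖ ≤ ‖z‖ := by
  simpa using Convex.norm_image_sub_le_of_norm_hasDerivWithin_le (f := Complex.exp) (C := 1)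
    (fun w _ => (Complex.hasDerivAt_exp w).hasDerivWithinAt)
    (fun w hw => by simpa [Complex.norm_exp] using hw) (convex_halfSpace_re_le 0)
    (by simp : (0 : ℂ) ∈ {w : ℂ | w.re ≤ 0}) hz

lemma measureReal_abs_gt_le_of_norm_one_sub_charFun_le {μ : Measure ℝ} [IsProbabilityMeasure μ]
    {r b : ℝ} (hr : 0 < r) (hb : ∀ t, |t| ≤ 2 / r → ‖1 - charFun μ t‖ ≤ b) :
    μ.real {x | r < |x|} ≤ 2 * b := by
  have hr' : 0 < r⁻¹ := inv_pos.2 hr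
  have hlen : |2 * r⁻¹ - -2 * r⁻¹| = 4 / r := by
    rw [abs_of_pos (by linarith)]; ring
  have hint : ‖∫ t in (-2 * r⁻¹)..(2 * r⁻¹), 1 - charFun μ t‖ ≤ b * (4 / r) := by
    rw [← hlen]
    refine intervalIntegral.norm_integral_le_of_norm_le_const fun t ht => hb t ?_
    rw [uIoc_of_le (by linarith)] at ht
    rw [div_eq_mul_inv]
    exact abs_le.2 ⟨by linarith [ht.1], by linarith [ht.2]⟩
  calc μ.real {x | r < |x|}
      ≤ 2⁻¹ * r * ‖∫ t in (-2 * r⁻¹)..(2 * r⁻¹), 1 - charFun μ t‖ :=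
        measureReal_abs_gt_le_integral_charFun hr
    _ ≤ 2⁻¹ * r * (b * (4 / r)) := by gcongr
    _ = 2 * b := by field_simp; ring

lemma charFn_eq_charFun (μ : Measure ℝ) (ξ : ℝ) : charFn μ ξ = charFun μ ξ := by
  simp only [charFn, charFun_apply_real, mul_comm Complex.I, mul_right_comm _ Complex.I]

lemma convPow_succ (ψ : Measure ℝ) (j : ℕ) : convPow ψ (j + 1) = convPow ψ j ∗ ψ := rfl

instance isProbabilityMeasure_convPow (ψ : Measure ℝ) [IsProbabilityMeasure ψ] (j : ℕ) :
    IsProbabilityMeasure (convPow ψ j) := by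
  induction j with
  | zero => exact Measure.dirac.isProbabilityMeasure
  | succ j ih => rw [convPow_succ]; infer_instance

instance sFinite_convPow (ψ : Measure ℝ) [SFinite ψ] (j : ℕ) : SFinite (convPow ψ j) := by
  induction j with
  | zero => exact (inferInstance : SFinite (Measure.dirac (0 : ℝ)))
  | succ j ih => rw [convPow_succ]; infer_instance

lemma charFun_convPow (ψ : Measure ℝ) [IsProbabilityMeasure ψ] (j : ℕ) (t : ℝ) :
    charFun (convPow ψ j) t = charFun ψ t ^ j := by
  induction j with
  | zero => simp [convPow, charFun_dirac]
  | succ j ih => rw [convPow_succ, charFun_conv, ih, pow_succ]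

lemma ae_nonneg_conv {μ ν : Measure ℝ} [SFinite μ] [SFinite ν] (hμ : ∀ᵐ x ∂μ, 0 ≤ x)
    (hν : ∀ᵐ x ∂ν, 0 ≤ x) : ∀ᵐ x ∂(μ ∗ ν), 0 ≤ x := by
  rw [Measure.conv, ae_map_iff (p := fun x => 0 ≤ x) measurable_add.aemeasurable measurableSet_Ici,
    Measure.ae_prod_iff_ae_ae (measurableSet_le measurable_const measurable_add)]
  exact hμ.mono fun x hx => hν.mono fun y hy => add_nonneg hx hy

lemma ae_nonneg_convPow {ψ : Measure ℝ} [SFinite ψ] (hψ : ∀ᵐ x ∂ψ, 0 ≤ x) (j : ℕ) :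
    ∀ᵐ x ∂(convPow ψ j), 0 ≤ x := by
  induction j with
  | zero => simp [convPow]
  | succ j ih => exact ae_nonneg_conv ih hψ

lemma measure_Ioi_eq_one_of_neg {ψ : Measure ℝ} [IsProbabilityMeasure ψ] (hψ : ∀ᵐ x ∂ψ, 0 ≤ x)
    {y : ℝ} (hy : y < 0) : ψ (Ioi y) = 1 := by
  refine (prob_compl_eq_zero_iff measurableSet_Ioi).1
    (measure_mono_null (fun x hx => ?_) (ae_iff.1 hψ))
  simp only [compl_Ioi, mem_Iic] at hx
  simp only [mem_ofPred_eq, not_le]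
  linarith

lemma measurable_measure_Ioi_sub (ψ : Measure ℝ) (s : ℝ) :
    Measurable fun u => ψ (Ioi (s - u)) :=
  have hanti : Antitone fun x => ψ (Ioi x) := fun _ _ hab => measure_mono (Ioi_subset_Ioi hab)
  hanti.measurable.comp (measurable_const.sub measurable_id)

lemma conv_apply_Ioi {μ ψ : Measure ℝ} [SFinite μ] [IsProbabilityMeasure ψ]
    (hμ : ∀ᵐ x ∂μ, 0 ≤ x) (hψ : ∀ᵐ x ∂ψ, 0 ≤ x) (s : ℝ) :
    (μ ∗ ψ) (Ioi s) = μ (Ioi s) + ∫⁻ u in Icc 0 s, ψ (Ioi (s - u)) ∂μ := by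
  have hfiber : (μ ∗ ψ) (Ioi s) = ∫⁻ u, ψ (Ioi (s - u)) ∂μ := by
    rw [Measure.conv, Measure.map_apply measurable_add measurableSet_Ioi,
      Measure.prod_apply (measurable_add measurableSet_Ioi)]
    congr with u
    congr 1
    ext v
    simp [sub_lt_iff_lt_add']
  have hIic : ∫⁻ u in Iic s, ψ (Ioi (s - u)) ∂μ = ∫⁻ u in Icc 0 s, ψ (Ioi (s - u)) ∂μ :=
    setLIntegral_congr (hμ.mono fun x hx => propext ⟨fun h => ⟨hx, h⟩, fun h => h.2⟩)
  have hIoi : ∫⁻ u in Ioi s, ψ (Ioi (s - u)) ∂μ = μ (Ioi s) := by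
    rw [setLIntegral_congr_fun measurableSet_Ioi
      (fun u hu => measure_Ioi_eq_one_of_neg hψ (sub_neg.2 hu)), setLIntegral_one]
  rw [hfiber, ← lintegral_add_compl _ measurableSet_Iic, compl_Iic, hIic, hIoi, add_comm]

lemma measureReal_conv_Ioi {μ ψ : Measure ℝ} [IsFiniteMeasure μ] [IsProbabilityMeasure ψ]
    (hμ : ∀ᵐ x ∂μ, 0 ≤ x) (hψ : ∀ᵐ x ∂ψ, 0 ≤ x) (s : ℝ) :
    (μ ∗ ψ).real (Ioi s) = μ.real (Ioi s) + ∫ u in Icc 0 s, (ψ (Ioi (s - u))).toReal ∂μ := by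
  have h := conv_apply_Ioi hμ hψ s
  have hfin := ENNReal.add_ne_top.1 (h ▸ measure_ne_top (μ ∗ ψ) (Ioi s))
  rw [measureReal_def, h, ENNReal.toReal_add hfin.1 hfin.2, measureReal_def,
    integral_toReal (measurable_measure_Ioi_sub ψ s).aemeasurable
      (ae_of_all _ fun u => measure_lt_top ψ _)]

lemma sum_range_integral_eq_convPow_real_Ioi {ψ : Measure ℝ} [IsProbabilityMeasure ψ]
    (hψ : ∀ᵐ x ∂ψ, 0 ≤ x) {s : ℝ} (hs : 0 ≤ s) (J : ℕ) :
    ∑ j ∈ Finset.range J, ∫ u in Icc 0 s, (ψ (Ioi (s - u))).toReal ∂(convPow ψ j) =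
      (convPow ψ J).real (Ioi s) := by
  induction J with
  | zero => simp [convPow, measureReal_def, not_lt.2 hs]
  | succ J ih =>
    rw [Finset.sum_range_succ, ih, convPow_succ, measureReal_conv_Ioi (ae_nonneg_convPow hψ J) hψ s]

lemma tsum_pow_mul_le_sum_range_add_pow {a : ℕ → ℝ} {q : ℝ} (ha : ∀ j, 0 ≤ a j)
    (hsum : ∀ J, ∑ j ∈ Finset.range J, a j ≤ 1) (hq0 : 0 ≤ q) (hq1 : q ≤ 1) (J : ℕ) :
    ∑' j, q ^ j * a j ≤ ∑ j ∈ Finset.range J, a j + q ^ J := by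
  have hqa_le : ∀ j, q ^ j * a j ≤ a j := fun j =>
    mul_le_of_le_one_left (ha j) (pow_le_one₀ hq0 hq1)
  have ha_summ : Summable a := summable_of_sum_range_le ha hsum
  have hqa_summ : Summable fun j => q ^ j * a j :=
    ha_summ.of_nonneg_of_le (fun j => mul_nonneg (pow_nonneg hq0 j) (ha j)) hqa_le
  have htail : ∑' i, a (i + J) ≤ 1 := by
    have := ha_summ.sum_add_tsum_nat_add J
    linarith [Real.tsum_le_of_sum_range_le ha hsum,
      Finset.sum_nonneg fun j (_ : j ∈ Finset.range J) => ha j]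
  rw [← hqa_summ.sum_add_tsum_nat_add J]
  gcongr
  · exact hqa_le _
  · calc ∑' i, q ^ (i + J) * a (i + J) ≤ ∑' i, q ^ J * a (i + J) := by
          refine ((summable_nat_add_iff J).2 hqa_summ).tsum_le_tsum (fun i => ?_)
            (((summable_nat_add_iff J).2 ha_summ).mul_left _)
          exact mul_le_mul_of_nonneg_right (pow_le_pow_of_le_one hq0 hq1 (by omega)) (ha _)
      _ = q ^ J * ∑' i, a (i + J) := tsum_mul_left
      _ ≤ q ^ J := mul_le_of_le_one_right (pow_nonneg hq0 J) htail

lemma one_sub_natCast_div_nonneg {k n : ℕ} (hkn : k ≤ n) : 0 ≤ 1 - (k : ℝ) / n :=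
  sub_nonneg.2 (div_le_one_of_le₀ (by exact_mod_cast hkn) n.cast_nonneg)

lemma pauseF_nonneg (ψ : Measure ℝ) {k n : ℕ} (hkn : k ≤ n) (s : ℝ) : 0 ≤ pauseF ψ k n s :=
  tsum_nonneg fun j => mul_nonneg (pow_nonneg (one_sub_natCast_div_nonneg hkn) j)
    (integral_nonneg fun _ => ENNReal.toReal_nonneg)

lemma pauseF_le_convPow_real_Ioi_add_pow {ψ : Measure ℝ} [IsProbabilityMeasure ψ]
    (hψ : ∀ᵐ x ∂ψ, 0 ≤ x) {k n : ℕ} (hkn : k ≤ n) {s : ℝ} (hs : 0 ≤ s) (J : ℕ) :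
    pauseF ψ k n s ≤ (convPow ψ J).real (Ioi s) + (1 - (k : ℝ) / n) ^ J := by
  rw [← sum_range_integral_eq_convPow_real_Ioi hψ hs]
  refine tsum_pow_mul_le_sum_range_add_pow
    (fun j => integral_nonneg fun _ => ENNReal.toReal_nonneg) (fun M => ?_)
    (one_sub_natCast_div_nonneg hkn) (sub_le_self _ (by positivity)) J
  rw [sum_range_integral_eq_convPow_real_Ioi hψ hs]
  exact measureReal_le_one

lemma norm_one_sub_stableCharFun_pow_le (α c : ℝ) (J : ℕ) (t : ℝ) :
    ‖1 - Complex.exp (-(|t| ^ α : ℝ) * (1 - Complex.I * (c * Real.sign t))) ^ J‖ ≤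
      J * |t| ^ α * (1 + |c|) := by
  set z : ℂ := J * (-(|t| ^ α : ℝ) * (1 - Complex.I * (c * Real.sign t)))
  have hz_re : z.re = -(J * |t| ^ α) := by
    simp [z, Complex.mul_re, Complex.mul_im]
  have hz_norm : ‖z‖ ≤ J * |t| ^ α * (1 + |c|) := by
    have hsign : ‖Complex.I * (c * Real.sign t : ℝ)‖ ≤ |c| := by
      have : |Real.sign t| ≤ 1 := by
        rcases Real.sign_apply_eq t with h | h | h <;> simp [h]
      simpa [abs_mul] using mul_le_of_le_one_right (abs_nonneg c) this
    calc ‖z‖ = J * |t| ^ α * ‖1 - Complex.I * (c * Real.sign t : ℝ)‖ := by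
          simp [z, mul_assoc, abs_of_nonneg (Real.rpow_nonneg (abs_nonneg t) α)]
      _ ≤ J * |t| ^ α * (1 + |c|) := by
          gcongr
          exact (norm_sub_le _ _).trans (by simpa using hsign)
  have hz_re_nonpos : z.re ≤ 0 := by rw [hz_re]; exact neg_nonpos.2 (by positivity)
  rw [← Complex.exp_nat_mul, norm_sub_rev]
  exact (Complex.norm_exp_sub_one_le_of_re_nonpos hz_re_nonpos).trans hz_norm

lemma convPow_real_Ioi_le_of_charFn_stable {α : ℝ} (hα : 0 < α) {ψ : Measure ℝ}
    [IsProbabilityMeasure ψ]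
    (hchar : ∀ ξ : ℝ, charFn ψ ξ =
      Complex.exp (-(|ξ| ^ α : ℝ) * (1 - Complex.I * (Real.tan (π * α / 2) * Real.sign ξ))))
    (J : ℕ) {s : ℝ} (hs : 0 < s) :
    (convPow ψ J).real (Ioi s) ≤ 2 * (J * (2 / s) ^ α * (1 + |Real.tan (π * α / 2)|)) := by
  calc (convPow ψ J).real (Ioi s) ≤ (convPow ψ J).real {x | s < |x|} :=
        measureReal_mono fun x hx => lt_of_lt_of_le hx (le_abs_self x)
    _ ≤ _ := by
      refine measureReal_abs_gt_le_of_norm_one_sub_charFun_le hs fun t ht => ?_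
      rw [charFun_convPow, ← charFn_eq_charFun, hchar]
      refine (norm_one_sub_stableCharFun_pow_le α _ J t).trans ?_
      gcongr

lemma tendsto_nhds_zero_of_le_add {ι κ : Type*} {l : Filter ι} {l' : Filter κ} [l'.NeBot]
    {f : ι → ℝ} {g : κ → ι → ℝ} {h : κ → ℝ} (hf : ∀ᶠ i in l, 0 ≤ f i)
    (hg : ∀ m, Tendsto (g m) l (𝓝 0)) (hh : Tendsto h l' (𝓝 0))
    (hle : ∀ m, ∀ᶠ i in l, f i ≤ g m i + h m) : Tendsto f l (𝓝 0) := by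
  refine tendsto_order.2 ⟨fun a ha => hf.mono fun i hi => ha.trans_le hi, fun a ha => ?_⟩
  obtain ⟨m, hm⟩ := (hh.eventually (gt_mem_nhds (half_pos ha))).exists
  filter_upwards [(hg m).eventually (gt_mem_nhds (half_pos ha)), hle m] with i hgi hi
  linarith

lemma tendsto_natCast_div_rpow_of_tendsto_div_rpow_inv {α : ℝ} (hα : 0 < α) {θ : ℕ → ℝ}
    (hθ : ∀ n, 0 ≤ θ n) (h : Tendsto (fun n : ℕ => θ n / (n : ℝ) ^ (1 / α)) atTop atTop) :
    Tendsto (fun n : ℕ => (n : ℝ) / θ n ^ α) atTop (𝓝 0) := by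
  refine ((tendsto_rpow_neg_atTop hα).comp h).congr fun n => ?_
  rw [Function.comp_apply, Real.rpow_neg (div_nonneg (hθ n) (by positivity)),
    Real.div_rpow (hθ n) (by positivity), ← Real.rpow_mul n.cast_nonneg,
    one_div_mul_cancel hα.ne', Real.rpow_one, inv_div]

/-- for the one-sided α-stable pausing time, if `θ_n / n^{1/α} → ∞`, then
`f(k, n, t θ_n) → 0` for every integer `k ≥ 2` and `t > 0`. -/
theorem stable_pauseF_limit_super_scaling
    (α : ℝ) (hα : α ∈ Set.Ioo (0 : ℝ) 1)
    (ψ : Measure ℝ) [IsProbabilityMeasure ψ]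
    (hsupp : ψ (Set.Iio 0) = 0)
    (hchar : ∀ ξ : ℝ, charFn ψ ξ =
      Complex.exp (-(|ξ| ^ α : ℝ) * (1 - Complex.I * (Real.tan (π * α / 2) * Real.sign ξ))))
    (θ : ℕ → ℝ) (hθ : ∀ n, 0 < θ n)
    (hscale : Tendsto (fun n : ℕ => θ n / (n : ℝ) ^ (1 / α)) atTop atTop)
    (k : ℕ) (hk : 2 ≤ k) (t : ℝ) (ht : 0 < t) :
    Tendsto (fun n : ℕ => pauseF ψ k n (t * θ n)) atTop (𝓝 0) := by
  have hα0 : 0 < α := hα.1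
  have hψ : ∀ᵐ x ∂ψ, 0 ≤ x := by
    rw [ae_iff]; simpa [← Iio_def] using hsupp
  set C := 1 + |Real.tan (π * α / 2)|
  refine tendsto_nhds_zero_of_le_add (l' := atTop)
    (g := fun (m n : ℕ) => 2 * ((n * m : ℕ) * (2 / (t * θ n)) ^ α * C))
    (h := fun m => Real.exp (-k) ^ m)
    ((eventually_ge_atTop k).mono fun n hn => pauseF_nonneg ψ hn _) (fun m => ?_)
    (tendsto_pow_atTop_nhds_zero_of_lt_one (Real.exp_pos _).le
      (Real.exp_lt_one_iff.2 (neg_lt_zero.2 (Nat.cast_pos.2 (by omega))))) (fun m => ?_)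
  · have := (tendsto_natCast_div_rpow_of_tendsto_div_rpow_inv hα0 (fun n => (hθ n).le)
      hscale).const_mul (2 * m * C * 2 ^ α / t ^ α)
    rw [mul_zero] at this
    refine this.congr fun n => ?_
    rw [Real.div_rpow zero_le_two (mul_pos ht (hθ n)).le, Real.mul_rpow ht.le (hθ n).le]
    push_cast
    field_simp
  · filter_upwards [eventually_ge_atTop k] with n hkn
    have hgeom : (1 - (k : ℝ) / n) ^ (n * m) ≤ Real.exp (-k) ^ m := by
      rw [pow_mul]
      exact pow_le_pow_left₀ (pow_nonneg (one_sub_natCast_div_nonneg hkn) n)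
        (Real.one_sub_div_pow_le_exp_neg (by exact_mod_cast hkn)) m
    exact (pauseF_le_convPow_real_Ioi_add_pow hψ hkn (mul_pos ht (hθ n)).le (n * m)).trans
      (add_le_add (convPow_real_Ioi_le_of_charFn_stable hα0 hchar _ (mul_pos ht (hθ n))) hgeom)
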